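/- Let n ≥ 1 and fix a finite family of linear symmetries for an object with n indices. For every dimension k > n, the number of independent components can be computed from its first n values as f(k) = Σ_{i=1}^{n} (−1)^{n−i} · f(i) · C(k, i) · C(k−1−i, n−i), where C(·,·) denotes the binomial coefficient. -/

import Mathlib

/-!
Split the index assignments `ι : Fin n → Fin k` according to their image `S ⊆ Fin k`. The
symmetries permute the indices, so they preserve the image and the system decouples into one
block per `S`, isomorphic to the system restricted to the surjections `Fin n → Fin #S`. Hence
`f k = ∑_{m ≤ n} C(k, m) g m`, where `g m` is the dimension for surjections onto `Fin m`; there are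
none for `m > n` and, as `n ≥ 1`, none for `m = 0`. So `f` is a polynomial of degree at most `n`
with `f 0 = 0`, and the formula is Lagrange interpolation at the nodes `0, …, n`. The identity
behind it reduces, via `C(k, i) C(i, m) = C(k, m) C(k - m, i - m)`, to Chu–Vandermonde for the
upper indices `k` and `n - k < 0`.
-/

open Finset Module

/-- The subspace of indexed objects `A : (Fin n → Fin k) → ℝ` satisfying the
homogeneous system induced by a family of `s` linear symmetries, the `l`-th
symmetry having `p l` terms with coefficients `a l j` and permutations `π l j`:
for every index assignment `ι`, `∑ j, a l j * A (ι ∘ π l j) = 0`. -/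
def solSpace (n k s : ℕ) (p : Fin s → ℕ)
    (a : (l : Fin s) → Fin (p l) → ℝ)
    (π : (l : Fin s) → Fin (p l) → Equiv.Perm (Fin n)) :
    Submodule ℝ ((Fin n → Fin k) → ℝ) where
  carrier := {A | ∀ (l : Fin s) (ι : Fin n → Fin k),
    ∑ j : Fin (p l), a l j * A (ι ∘ (π l j)) = 0}
  add_mem' := by
    intro A B hA hB l ι
    have hA' := hA l ι
    have hB' := hB l ι
    simp only [Pi.add_apply, mul_add, Finset.sum_add_distrib]
    rw [hA', hB', add_zero]
  zero_mem' := by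
    intro l ι
    simp
  smul_mem' := by
    intro c A hA l ι
    have hA' := hA l ι
    simp only [Pi.smul_apply, smul_eq_mul, mul_left_comm, ← Finset.mul_sum]
    rw [hA', mul_zero]

/-- The weight of the node `i` in Lagrange interpolation at the nodes `0, …, n`, evaluated at
`k > n`: `∏_{j ≠ i} (k - j) / (i - j) = (-1)^(n-i) C(k,i) C(k-1-i, n-i)`. -/
def lagrangeWeight (n k i : ℕ) : ℤ :=
  (-1) ^ (n - i) * k.choose i * (k - 1 - i).choose (n - i)

lemma lagrangeWeight_eq_choose_mul_ringChoose {n k i : ℕ} (hi : i ≤ n) (hk : n < k) :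
    lagrangeWeight n k i = k.choose i * Ring.choose ((n : ℤ) - k) (n - i) := by
  have hneg : (n : ℤ) - k = -((k - n : ℕ) : ℤ) := by push_cast [hk.le]; ring
  have hup : ((k - n : ℕ) : ℤ) + (n - i : ℕ) - 1 = ((k - 1 - i : ℕ) : ℤ) := by
    push_cast [hi, hk.le, show i ≤ k - 1 by omega, show 1 ≤ k by omega]; ring
  rw [lagrangeWeight, hneg, Ring.choose_neg, hup, Ring.choose_natCast, Units.smul_def,
    Int.coe_negOnePow_natCast, smul_eq_mul]
  ring

lemma sum_lagrangeWeight {n k : ℕ} (hk : n < k) :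
    ∑ i ∈ range (n + 1), lagrangeWeight n k i = 1 := by
  have vandermonde := Ring.add_choose_eq n (Commute.all (k : ℤ) ((n : ℤ) - k))
  rw [add_sub_cancel, Ring.choose_natCast, Nat.choose_self, Nat.cast_one,
    Nat.sum_antidiagonal_eq_sum_range_succ
      (fun i j => Ring.choose (k : ℤ) i * Ring.choose ((n : ℤ) - k) j)] at vandermonde
  rw [vandermonde]
  refine sum_congr rfl fun i hi => ?_
  rw [lagrangeWeight_eq_choose_mul_ringChoose (by simp at hi; omega) hk, Ring.choose_natCast]

lemma lagrangeWeight_add_mul_choose {n k m a : ℕ} (ha : m + a ≤ n) (hk : n < k) :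
    lagrangeWeight n k (m + a) * (m + a).choose m
      = k.choose m * lagrangeWeight (n - m) (k - m) a := by
  have hchoose : (k.choose (m + a) * (m + a).choose m : ℤ) = k.choose m * (k - m).choose a := by
    have := Nat.choose_mul (n := k) (k := m + a) (s := m) (by omega)
    rw [Nat.add_sub_cancel_left] at this
    exact_mod_cast this
  rw [lagrangeWeight, lagrangeWeight, show n - (m + a) = n - m - a by omega,
    show k - 1 - (m + a) = k - m - 1 - a by omega]
  linear_combination ((-1) ^ (n - m - a) * ((k - m - 1 - a).choose (n - m - a) : ℤ)) * hchoose

lemma sum_lagrangeWeight_mul_choose {n k m : ℕ} (hm : m ≤ n) (hk : n < k) :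
    ∑ i ∈ range (n + 1), lagrangeWeight n k i * i.choose m = k.choose m := by
  rw [show n + 1 = m + (n - m + 1) by omega, sum_range_add,
    sum_eq_zero fun i hi => by rw [Nat.choose_eq_zero_of_lt (mem_range.1 hi), Nat.cast_zero,
      mul_zero], zero_add]
  rw [sum_congr rfl fun a ha => lagrangeWeight_add_mul_choose (by simp at ha; omega) hk,
    ← mul_sum, sum_lagrangeWeight (by omega), mul_one]

lemma eq_sum_lagrangeWeight_mul {F g : ℕ → ℤ} {n k : ℕ}
    (hF : ∀ i, F i = ∑ m ∈ range (n + 1), (i.choose m : ℤ) * g m) (hk : n < k) :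
    F k = ∑ i ∈ range (n + 1), lagrangeWeight n k i * F i := by
  simp_rw [hF, mul_sum, ← mul_assoc]
  rw [sum_comm]
  refine sum_congr rfl fun m hm => ?_
  rw [← sum_mul, sum_lagrangeWeight_mul_choose (by simp at hm; omega) hk]

lemma eq_sum_Icc_lagrangeWeight_mul {F g : ℕ → ℤ} {n k : ℕ}
    (hF : ∀ i, F i = ∑ m ∈ range (n + 1), (i.choose m : ℤ) * g m) (hg : g 0 = 0) (hk : n < k) :
    F k = ∑ i ∈ Icc 1 n, lagrangeWeight n k i * F i := by
  have hF0 : F 0 = 0 := by simp [hF, sum_range_succ', hg]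
  rw [eq_sum_lagrangeWeight_mul hF hk, range_eq_Ico, sum_eq_sum_Ico_succ_bot (by omega), hF0,
    mul_zero, zero_add, Ico_add_one_right_eq_Icc]

lemma sum_range_choose_mul_eq_of_eq_zero {g : ℕ → ℕ} {n : ℕ} (hg : ∀ m, n < m → g m = 0)
    (k : ℕ) : ∑ m ∈ range (k + 1), k.choose m * g m = ∑ m ∈ range (n + 1), k.choose m * g m := by
  rcases le_total k n with hkn | hnk
  · refine sum_subset (range_subset_range.2 (by omega)) fun m hm hm' => ?_
    rw [Nat.choose_eq_zero_of_lt (by simp at hm hm'; omega), zero_mul]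
  · refine (sum_subset (range_subset_range.2 (by omega)) fun m hm hm' => ?_).symm
    rw [hg m (by simp at hm hm'; omega), mul_zero]

section SolutionSpace

variable {L : Type*} {J : L → Type*} [∀ l, Fintype (J l)] (a : ∀ l, J l → ℝ) {X Y : Type*}

def solutionSpace (σ : ∀ l, J l → X → X) : Submodule ℝ (X → ℝ) where
  carrier := {A | ∀ l x, ∑ j, a l j * A (σ l j x) = 0}
  add_mem' {A B} hA hB l x := by
    simp only [Pi.add_apply, mul_add, sum_add_distrib, hA l x, hB l x, add_zero]
  zero_mem' l x := by simp
  smul_mem' c A hA l x := by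
    simp only [Pi.smul_apply, smul_eq_mul, mul_left_comm, ← mul_sum, hA l x, mul_zero]

variable {a}

lemma mem_solutionSpace {σ : ∀ l, J l → X → X} {A : X → ℝ} :
    A ∈ solutionSpace a σ ↔ ∀ l x, ∑ j, a l j * A (σ l j x) = 0 := Iff.rfl

lemma finrank_solutionSpace_congr {σ : ∀ l, J l → X → X} {τ : ∀ l, J l → Y → Y} (E : X ≃ Y)
    (hE : ∀ l j x, E (σ l j x) = τ l j (E x)) :
    finrank ℝ (solutionSpace a σ) = finrank ℝ (solutionSpace a τ) := by
  have hcomap : (solutionSpace a σ).comap (LinearEquiv.funCongrLeft ℝ ℝ E).toLinearMap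
      = solutionSpace a τ := by
    ext A
    simp only [Submodule.mem_comap, mem_solutionSpace, LinearEquiv.coe_coe,
      LinearEquiv.funCongrLeft_apply, LinearMap.funLeft_apply, hE]
    exact forall_congr' fun l =>
      E.forall_congr_right (q := fun y => ∑ j, a l j * A (τ l j y) = 0)
  rw [← hcomap, Submodule.comap_equiv_eq_map_symm, LinearEquiv.finrank_map_eq]

def restrictAction (σ : ∀ l, J l → X → X) (P : X → Prop) (hP : ∀ l j x, P x → P (σ l j x))
    (l : L) (j : J l) (x : {x // P x}) : {x // P x} :=
  ⟨σ l j x, hP l j x x.2⟩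

def solutionSpaceEquivPiFiber (σ : ∀ l, J l → X → X) {T : Type*} (r : X → T)
    (hr : ∀ l j x, r (σ l j x) = r x) :
    solutionSpace a σ ≃ₗ[ℝ] ∀ t, solutionSpace a
      (restrictAction σ (r · = t) fun l j x hx => (hr l j x).trans hx) where
  toFun A t := ⟨fun x => A.1 x, fun l x => A.2 l x⟩
  map_add' _ _ := rfl
  map_smul' _ _ := rfl
  invFun B := ⟨fun x => (B (r x)).1 ⟨x, rfl⟩, fun l x => by
    have hB : ∀ t y (hy : r y = t), (B (r y)).1 ⟨y, rfl⟩ = (B t).1 ⟨y, hy⟩ := by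
      rintro t y rfl; rfl
    simp only [hB (r x) _ (hr _ _ _)]
    exact (B (r x)).2 l ⟨x, rfl⟩⟩
  left_inv _ := rfl
  right_inv B := by
    funext t
    ext ⟨x, rfl⟩
    rfl

lemma finrank_solutionSpace_eq_sum_fiber [Finite X] (σ : ∀ l, J l → X → X) {T : Type*}
    [Fintype T] (r : X → T) (hr : ∀ l j x, r (σ l j x) = r x) :
    finrank ℝ (solutionSpace a σ) = ∑ t, finrank ℝ (solutionSpace a
      (restrictAction σ (r · = t) fun l j x hx => (hr l j x).trans hx)) := by
  rw [(solutionSpaceEquivPiFiber σ r hr).finrank_eq, finrank_pi_fintype]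

lemma finrank_solutionSpace_of_isEmpty [Fintype X] [IsEmpty X] (σ : ∀ l, J l → X → X) :
    finrank ℝ (solutionSpace a σ) = 0 :=
  Nat.eq_zero_of_le_zero <| (Submodule.finrank_le _).trans_eq <| by
    rw [finrank_fintype_fun_eq_card, Fintype.card_eq_zero]

end SolutionSpace

noncomputable def imageFiberEquivSurjective {α β : Type*} [Fintype α] [DecidableEq β]
    (S : Finset β) :
    {f : α → β // univ.image f = S} ≃ {g : α → Fin #S // Function.Surjective g} where
  toFun f := ⟨fun x => S.equivFin
      ⟨f.1 x, (Finset.ext_iff.1 f.2 _).1 (mem_image_of_mem _ (mem_univ x))⟩,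
    fun y => by
      obtain ⟨x, -, hx⟩ := mem_image.1 ((Finset.ext_iff.1 f.2 _).2 (S.equivFin.symm y).2)
      exact ⟨x, by simp [hx]⟩⟩
  invFun g := ⟨fun x => S.equivFin.symm (g.1 x), by
    ext b
    refine ⟨fun hb => ?_, fun hb => ?_⟩
    · obtain ⟨x, -, rfl⟩ := mem_image.1 hb
      exact (S.equivFin.symm _).2
    · obtain ⟨x, hx⟩ := g.2 (S.equivFin ⟨b, hb⟩)
      exact mem_image.2 ⟨x, mem_univ x, by simp [hx]⟩⟩
  left_inv f := by ext; simp
  right_inv g := by ext; simp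

section Counting

variable {L : Type*} {J : L → Type*} [∀ l, Fintype (J l)] (a : ∀ l, J l → ℝ) {n : ℕ}
  (π : ∀ l, J l → Equiv.Perm (Fin n))

/-- The number of independent components among those whose indices take exactly
the values `0, …, m - 1`. -/
noncomputable def surjFinrank (m : ℕ) : ℕ :=
  finrank ℝ (solutionSpace a (restrictAction (fun l j (ι : Fin n → Fin m) => ι ∘ π l j)
    Function.Surjective fun l j _ hι => hι.comp (π l j).surjective))

lemma surjFinrank_zero (hn : n ≠ 0) : surjFinrank a π 0 = 0 :=
  have : IsEmpty {ι : Fin n → Fin 0 // ι.Surjective} := ⟨fun ι => (ι.1 ⟨0, by omega⟩).elim0⟩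
  finrank_solutionSpace_of_isEmpty _

lemma surjFinrank_eq_zero_of_lt {m : ℕ} (hm : n < m) : surjFinrank a π m = 0 :=
  have : IsEmpty {ι : Fin n → Fin m // ι.Surjective} :=
    ⟨fun ι => (Fintype.card_le_of_surjective _ ι.2).not_gt (by simpa using hm)⟩
  finrank_solutionSpace_of_isEmpty _

lemma finrank_solutionSpace_eq_sum_choose_mul_surjFinrank (k : ℕ) :
    finrank ℝ (solutionSpace a fun l j (ι : Fin n → Fin k) => ι ∘ π l j)
      = ∑ m ∈ range (k + 1), k.choose m * surjFinrank a π m := by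
  have himage : ∀ l j (ι : Fin n → Fin k), univ.image (ι ∘ π l j) = univ.image ι := by
    intro l j ι
    rw [← image_image, image_univ_equiv]
  rw [finrank_solutionSpace_eq_sum_fiber _ (fun ι => univ.image ι) himage]
  have hfiber : ∀ S : Finset (Fin k), finrank ℝ (solutionSpace a (restrictAction _ _
      fun l j ι hι => (himage l j ι).trans hι)) = surjFinrank a π #S := fun S =>
    finrank_solutionSpace_congr (imageFiberEquivSurjective S) fun _ _ _ => rfl
  simp_rw [hfiber, ← powerset_univ, sum_powerset_apply_card, card_univ, Fintype.card_fin,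
    smul_eq_mul]

end Counting

lemma solSpace_eq_solutionSpace (n k s : ℕ) (p : Fin s → ℕ) (a : (l : Fin s) → Fin (p l) → ℝ)
    (π : (l : Fin s) → Fin (p l) → Equiv.Perm (Fin n)) :
    solSpace n k s p a π = solutionSpace a fun l j (ι : Fin n → Fin k) => ι ∘ π l j :=
  rfl

/-- for every dimension `k > n`, the number of independent
components can be computed from its first `n` values as
`f(k) = ∑_{i=1}^{n} (-1)^(n-i) * f(i) * C(k,i) * C(k-1-i, n-i)`. -/
theorem numIndepComponents_from_first_n_values
    (n s : ℕ) (hn : 1 ≤ n) (p : Fin s → ℕ)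
    (a : (l : Fin s) → Fin (p l) → ℝ)
    (π : (l : Fin s) → Fin (p l) → Equiv.Perm (Fin n))
    (k : ℕ) (hk : n < k) :
    (Module.finrank ℝ (solSpace n k s p a π) : ℤ) =
      ∑ i ∈ Finset.Icc 1 n,
        (-1 : ℤ) ^ (n - i) * (Module.finrank ℝ (solSpace n i s p a π)) *
          (Nat.choose k i) * (Nat.choose (k - 1 - i) (n - i)) := by
  have hf : ∀ i, (finrank ℝ (solSpace n i s p a π) : ℤ)
      = ∑ m ∈ range (n + 1), (i.choose m : ℤ) * surjFinrank a π m := fun i => by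
    rw [solSpace_eq_solutionSpace, finrank_solutionSpace_eq_sum_choose_mul_surjFinrank,
      sum_range_choose_mul_eq_of_eq_zero fun m => surjFinrank_eq_zero_of_lt a π]
    push_cast
    rfl
  rw [eq_sum_Icc_lagrangeWeight_mul hf (by rw [surjFinrank_zero a π (by omega), Nat.cast_zero]) hk]
  exact sum_congr rfl fun i _ => by rw [lagrangeWeight]; ring
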